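/- Let Σ be a symmetric real n×n matrix, Σ̃ its block-diagonal part with respect to a fixed block partition, E = Σ − Σ̃, and μ ∈ ℝⁿ. Define V = 2Tr(Σ²) + 4μᵀΣμ and Ṽ = 2Tr(Σ̃²) + 4μᵀΣ̃μ. Then |V − Ṽ| ≤ 2‖E‖_F² + 4‖μ‖₂²‖E‖₂, where ‖E‖₂ is the spectral (operator) norm. -/

import Mathlib

open scoped BigOperators Matrix

/-- Squared Frobenius norm of a real matrix. -/
noncomputable def frobSq {ι : Type*} [Fintype ι] (M : Matrix ι ι ℝ) : ℝ :=
  ∑ x, ∑ y, (M x y) ^ 2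

/-- Spectral norm (operator norm induced by the Euclidean norm) of a real matrix. -/
noncomputable def specNorm {ι : Type*} [Fintype ι] [DecidableEq ι] (M : Matrix ι ι ℝ) : ℝ :=
  ‖LinearMap.toContinuousLinearMap (Matrix.toEuclideanLin M)‖

/-- Euclidean norm of a real vector. -/
noncomputable def vecNorm {ι : Type*} [Fintype ι] (v : ι → ℝ) : ℝ :=
  Real.sqrt (∑ i, (v i) ^ 2)

/-!
Writing `Σ = Σ̃ + E`, the cross terms `Tr(Σ̃E)` and `Tr(EΣ̃)` vanish because `Σ̃` and `E` have
disjoint supports, so `V − Ṽ = 2 Tr(E²) + 4 μᵀEμ`. Then `|Tr(E²)| ≤ ‖E‖_F²` by AM–GM entrywise,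
and `|μᵀEμ| ≤ ‖μ‖₂²‖E‖₂` by Cauchy–Schwarz and the operator-norm bound.
-/

open Matrix

namespace Matrix

variable {ι κ R : Type*} [DecidableEq κ]

def blockDiagPart [Zero R] (b : ι → κ) (M : Matrix ι ι R) : Matrix ι ι R :=
  of fun x y => if b x = b y then M x y else 0

variable [Fintype ι] [CommRing R]

theorem trace_blockDiagPart_mul_sub_blockDiagPart (b : ι → κ) (A B : Matrix ι ι R) :
    (blockDiagPart b A * (B - blockDiagPart b B)).trace = 0 :=
  Finset.sum_eq_zero fun x _ => Finset.sum_eq_zero fun y _ => by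
    by_cases h : b x = b y <;> simp [blockDiagPart, h, Eq.comm]

theorem trace_mul_self_sub_trace_blockDiagPart_mul_self (b : ι → κ) (S : Matrix ι ι R) :
    (S * S).trace - (blockDiagPart b S * blockDiagPart b S).trace =
      ((S - blockDiagPart b S) * (S - blockDiagPart b S)).trace := by
  set D := blockDiagPart b S
  set E := S - D
  have hDE : (D * E).trace = 0 := trace_blockDiagPart_mul_sub_blockDiagPart b S S
  have hED : (E * D).trace = 0 := by rw [trace_mul_comm, hDE]
  rw [show S * S = (D + E) * (D + E) by rw [add_sub_cancel]]
  simp only [add_mul, mul_add, trace_add, hDE, hED]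
  ring

end Matrix

theorem abs_trace_mul_self_le_frobSq {ι : Type*} [Fintype ι] (M : Matrix ι ι ℝ) :
    |(M * M).trace| ≤ frobSq M := by
  have amgm : ∀ x y, |M x y * M y x| ≤ (M x y ^ 2 + M y x ^ 2) / 2 := fun x y => by
    rw [abs_le]
    constructor <;> nlinarith [sq_nonneg (M x y + M y x), sq_nonneg (M x y - M y x)]
  calc |(M * M).trace| = |∑ x, ∑ y, M x y * M y x| := by simp only [trace, diag, mul_apply]
    _ ≤ ∑ x, ∑ y, |M x y * M y x| := (Finset.abs_sum_le_sum_abs _ _).trans <|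
        Finset.sum_le_sum fun x _ => Finset.abs_sum_le_sum_abs _ _
    _ ≤ ∑ x, ∑ y, (M x y ^ 2 + M y x ^ 2) / 2 := by gcongr with x _ y _; exact amgm x y
    _ = frobSq M := by
        simp only [add_div, Finset.sum_add_distrib, frobSq]
        rw [Finset.sum_comm (f := fun x y => M y x ^ 2 / 2), ← Finset.sum_add_distrib]
        simp only [← Finset.sum_add_distrib, add_halves]

theorem vecNorm_eq_norm_toLp {ι : Type*} [Fintype ι] (v : ι → ℝ) :
    vecNorm v = ‖WithLp.toLp 2 v‖ := by
  simp [vecNorm, EuclideanSpace.norm_eq]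

theorem abs_dotProduct_mulVec_le {ι : Type*} [Fintype ι] [DecidableEq ι]
    (M : Matrix ι ι ℝ) (μ : ι → ℝ) :
    |μ ⬝ᵥ M *ᵥ μ| ≤ vecNorm μ ^ 2 * specNorm M := by
  set v : EuclideanSpace ℝ ι := WithLp.toLp 2 μ
  set T := LinearMap.toContinuousLinearMap (toEuclideanLin M)
  have hinner : μ ⬝ᵥ M *ᵥ μ = inner ℝ v (T v) := by
    simp [T, v, EuclideanSpace.inner_eq_star_dotProduct, dotProduct_comm]
  calc |μ ⬝ᵥ M *ᵥ μ| = |inner ℝ v (T v)| := by rw [hinner]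
    _ ≤ ‖v‖ * ‖T v‖ := abs_real_inner_le_norm v (T v)
    _ ≤ ‖v‖ * (‖T‖ * ‖v‖) := by gcongr; exact T.le_opNorm v
    _ = vecNorm μ ^ 2 * specNorm M := by rw [vecNorm_eq_norm_toLp, specNorm]; ring

theorem abs_V_sub_Vtilde_le_general
    {C : ℕ} {n : Fin C → ℕ}
    (S : Matrix ((i : Fin C) × Fin (n i)) ((i : Fin C) × Fin (n i)) ℝ)
    (Stilde : Matrix ((i : Fin C) × Fin (n i)) ((i : Fin C) × Fin (n i)) ℝ)
    (hSt : ∀ x y, Stilde x y = if x.1 = y.1 then S x y else 0)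
    (E : Matrix ((i : Fin C) × Fin (n i)) ((i : Fin C) × Fin (n i)) ℝ)
    (hE : E = S - Stilde)
    (μ : ((i : Fin C) × Fin (n i)) → ℝ)
    (V Vt : ℝ)
    (hV : V = 2 * (S * S).trace + 4 * (μ ⬝ᵥ S.mulVec μ))
    (hVt : Vt = 2 * (Stilde * Stilde).trace + 4 * (μ ⬝ᵥ Stilde.mulVec μ)) :
    |V - Vt| ≤ 2 * frobSq E + 4 * (vecNorm μ) ^ 2 * specNorm E := by
  obtain rfl : Stilde = blockDiagPart Sigma.fst S := Matrix.ext hSt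
  have hdiff : V - Vt = 2 * (E * E).trace + 4 * (μ ⬝ᵥ E *ᵥ μ) := by
    rw [hV, hVt, hE, ← trace_mul_self_sub_trace_blockDiagPart_mul_self, sub_mulVec, dotProduct_sub]
    ring
  calc |V - Vt| ≤ |2 * (E * E).trace| + |4 * (μ ⬝ᵥ E *ᵥ μ)| := hdiff ▸ abs_add_le _ _
    _ = 2 * |(E * E).trace| + 4 * |μ ⬝ᵥ E *ᵥ μ| := by
        rw [abs_mul, abs_mul, abs_two, abs_of_pos (four_pos : (0 : ℝ) < 4)]
    _ ≤ 2 * frobSq E + 4 * (vecNorm μ) ^ 2 * specNorm E := by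
        rw [mul_assoc 4]
        gcongr
        exacts [abs_trace_mul_self_le_frobSq E, abs_dotProduct_mulVec_le E μ]

/-- For `Σ` symmetric block-partitioned, `Σ̃` its block-diagonal part, `E = Σ − Σ̃` and
`μ ∈ ℝⁿ`, setting `V = 2Tr(Σ²) + 4μᵀΣμ` and `Ṽ = 2Tr(Σ̃²) + 4μᵀΣ̃μ`, we have
`|V − Ṽ| ≤ 2‖E‖_F² + 4‖μ‖₂²‖E‖₂`. -/
theorem abs_V_sub_Vtilde_le
    {C : ℕ} {n : Fin C → ℕ}
    (S : Matrix ((i : Fin C) × Fin (n i)) ((i : Fin C) × Fin (n i)) ℝ)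
    (hS : S.IsSymm)
    (Stilde : Matrix ((i : Fin C) × Fin (n i)) ((i : Fin C) × Fin (n i)) ℝ)
    (hSt : ∀ x y, Stilde x y = if x.1 = y.1 then S x y else 0)
    (E : Matrix ((i : Fin C) × Fin (n i)) ((i : Fin C) × Fin (n i)) ℝ)
    (hE : E = S - Stilde)
    (μ : ((i : Fin C) × Fin (n i)) → ℝ)
    (V Vt : ℝ)
    (hV : V = 2 * (S * S).trace + 4 * (μ ⬝ᵥ S.mulVec μ))
    (hVt : Vt = 2 * (Stilde * Stilde).trace + 4 * (μ ⬝ᵥ Stilde.mulVec μ)) :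
    |V - Vt| ≤ 2 * frobSq E + 4 * (vecNorm μ) ^ 2 * specNorm E :=
  abs_V_sub_Vtilde_le_general S Stilde hSt E hE μ V Vt hV hVt
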